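/- Let E be a symmetrically Δ-normed space of τ-measurable operators affiliated with a semifinite von Neumann algebra (M, τ), with carrier projection equal to 1. Then every projection p ∈ M with τ(p) < ∞ belongs to E, and consequently every operator x ∈ M with τ(s(x)) < ∞ (finite-trace support) belongs to E. -/

import Mathlib

/-!
The kernel of a sum of positive semidefinite matrices is the intersection of their kernels, so a
positive semidefinite element of `E` with minimal kernel is injective: otherwise a projection of
`E` not vanishing on that kernel would shrink it. A large real multiple of an injective `x` has all singular values above all
singular values of any given `y`, so `y ∈ E` by symmetry of `E`.
-/

open Matrix ComplexOrder

/-- The singular values of a matrix, sorted in increasing order. -/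
noncomputable def svSorted {n : ℕ} (A : Matrix (Fin n) (Fin n) ℂ) : Fin n → ℝ :=
  fun i => Real.sqrt ((Matrix.posSemidef_conjTranspose_mul_self A).1.eigenvalues
    (Tuple.sort (Matrix.posSemidef_conjTranspose_mul_self A).1.eigenvalues i))

lemma Finite.exists_pos_le_of_pos {ι : Type*} [Finite ι] {f : ι → ℝ} (hf : ∀ i, 0 < f i) :
    ∃ m, 0 < m ∧ ∀ i, m ≤ f i := by
  cases isEmpty_or_nonempty ι
  · exact ⟨1, one_pos, isEmptyElim⟩
  · obtain ⟨i, hi⟩ := Finite.exists_min f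
    exact ⟨f i, hf i, hi⟩

namespace Matrix

variable {n 𝕜 : Type*} [Fintype n] [RCLike 𝕜]

lemma PosSemidef.ker_mulVecLin_add {A B : Matrix n n 𝕜} (hA : A.PosSemidef) (hB : B.PosSemidef) :
    LinearMap.ker (A + B).mulVecLin = LinearMap.ker A.mulVecLin ⊓ LinearMap.ker B.mulVecLin := by
  ext v
  simp only [Submodule.mem_inf, LinearMap.mem_ker, mulVecLin_apply]
  refine ⟨fun h => ?_, fun ⟨hAv, hBv⟩ => by rw [add_mulVec, hAv, hBv, add_zero]⟩
  have hsum : star v ⬝ᵥ A *ᵥ v + star v ⬝ᵥ B *ᵥ v = 0 := by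
    rw [← dotProduct_add, ← add_mulVec, h, dotProduct_zero]
  obtain ⟨hAv, hBv⟩ := (add_eq_zero_iff_of_nonneg (hA.dotProduct_mulVec_nonneg v)
    (hB.dotProduct_mulVec_nonneg v)).mp hsum
  exact ⟨(hA.dotProduct_mulVec_zero_iff v).mp hAv, (hB.dotProduct_mulVec_zero_iff v).mp hBv⟩

lemma exists_mem_injective_mulVec (E : Submodule 𝕜 (Matrix n n 𝕜))
    (hE : ∀ v : n → 𝕜, v ≠ 0 → ∃ q ∈ E, q.PosSemidef ∧ q *ᵥ v ≠ 0) :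
    ∃ x ∈ E, Function.Injective x.mulVec := by
  obtain ⟨_, ⟨x, ⟨hxE, hx⟩, rfl⟩, hmin⟩ := wellFounded_lt.has_min
    ((fun x : Matrix n n 𝕜 => LinearMap.ker x.mulVecLin) '' {x | x ∈ E ∧ x.PosSemidef})
    ⟨_, 0, ⟨E.zero_mem, .zero⟩, rfl⟩
  refine ⟨x, hxE, ?_⟩
  change Function.Injective x.mulVecLin
  rw [← LinearMap.ker_eq_bot, eq_bot_iff]
  intro v hv
  rw [Submodule.mem_bot]
  by_contra hv0
  obtain ⟨q, hqE, hq, hqv⟩ := hE v hv0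
  refine hmin _ ⟨x + q, ⟨E.add_mem hxE hqE, hx.add hq⟩, rfl⟩ ?_
  dsimp only
  rw [hx.ker_mulVecLin_add hq]
  exact inf_lt_left.mpr fun hle => hqv (hle hv)

lemma IsHermitian.exists_eigenvalues_eq_mul [DecidableEq n] {A B : Matrix n n 𝕜}
    (hA : A.IsHermitian) (hB : B.IsHermitian) {r : ℝ} (hr : r ≠ 0) (hBA : B = r • A) (i : n) :
    ∃ j, hB.eigenvalues i = r * hA.eigenvalues j := by
  have h : hB.eigenvalues i ∈ spectrum ℝ (Units.mk0 r hr • A) :=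
    hBA ▸ hB.eigenvalues_mem_spectrum_real i
  rw [spectrum.unit_smul_eq_smul, hA.spectrum_real_eq_range_eigenvalues] at h
  obtain ⟨_, ⟨j, rfl⟩, hj⟩ := h
  exact ⟨j, hj.symm⟩

end Matrix

lemma svSorted_le_svSorted {n : ℕ} {x y : Matrix (Fin n) (Fin n) ℂ}
    (h : ∀ i j, (posSemidef_conjTranspose_mul_self y).1.eigenvalues i ≤
      (posSemidef_conjTranspose_mul_self x).1.eigenvalues j) (i : Fin n) :
    svSorted y i ≤ svSorted x i :=
  Real.sqrt_le_sqrt (h _ _)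

lemma exists_svSorted_le_svSorted_smul {n : ℕ} {x : Matrix (Fin n) (Fin n) ℂ}
    (hx : Function.Injective x.mulVec) (y : Matrix (Fin n) (Fin n) ℂ) :
    ∃ t : ℝ, ∀ i, svSorted y i ≤ svSorted (t • x) i := by
  obtain ⟨m, hm, hmx⟩ :=
    Finite.exists_pos_le_of_pos (PosDef.conjTranspose_mul_self x hx).eigenvalues_pos
  obtain ⟨T, hT⟩ := Finite.bddAbove_range (posSemidef_conjTranspose_mul_self y).1.eigenvalues
  set t := √(max T 1 / m)
  have htt : t * t * m = max T 1 := by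
    rw [Real.mul_self_sqrt (by positivity), div_mul_cancel₀ _ hm.ne']
  have ht : t * t ≠ 0 :=
    left_ne_zero_of_mul (htt ▸ (zero_lt_one.trans_le (le_max_right T 1)).ne')
  refine ⟨t, svSorted_le_svSorted fun i j => ?_⟩
  obtain ⟨k, hk⟩ := (posSemidef_conjTranspose_mul_self x).1.exists_eigenvalues_eq_mul
    (posSemidef_conjTranspose_mul_self (t • x)).1 ht
    (by rw [conjTranspose_smul, smul_mul, Matrix.mul_smul, smul_smul, star_trivial]) j
  calc _ ≤ max T 1 := (hT ⟨i, rfl⟩).trans (le_max_left T 1)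
    _ = t * t * m := htt.symm
    _ ≤ t * t * _ := mul_le_mul_of_nonneg_left (hmx k) (mul_self_nonneg t)
    _ = _ := hk.symm

theorem stmt_15_general {n : ℕ} (E : Submodule ℂ (Matrix (Fin n) (Fin n) ℂ))
    (nrm : Matrix (Fin n) (Fin n) ℂ → ℝ)
    (hsym : ∀ x y, x ∈ E → (∀ i, svSorted y i ≤ svSorted x i) →
      y ∈ E ∧ nrm y ≤ nrm x)
    (hcarrier : ∀ v : Fin n → ℂ, v ≠ 0 → ∃ q : Matrix (Fin n) (Fin n) ℂ,
      q ∈ E ∧ q * q = q ∧ qᴴ = q ∧ q.mulVec v ≠ 0) :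
    (∀ q : Matrix (Fin n) (Fin n) ℂ, q * q = q → qᴴ = q → q ∈ E) ∧
    (∀ x : Matrix (Fin n) (Fin n) ℂ, x ∈ E) := by
  obtain ⟨x, hxE, hx⟩ := exists_mem_injective_mulVec E fun v hv => by
    obtain ⟨q, hqE, hqq, hqH, hqv⟩ := hcarrier v hv
    refine ⟨q, hqE, ?_, hqv⟩
    simpa only [hqH, hqq] using posSemidef_conjTranspose_mul_self q
  have hall : ∀ y, y ∈ E := fun y => by
    obtain ⟨t, ht⟩ := exists_svSorted_le_svSorted_smul hx y
    exact (hsym _ y (E.smul_of_tower_mem t hxE) ht).1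
  exact ⟨fun q _ _ => hall q, hall⟩

/-- Matrix version of: in a symmetrically Δ-normed space whose carrier projection
is `1`, every finite-trace projection (here: every projection) belongs to `E`,
and consequently every operator of finite-trace support (here: every matrix)
belongs to `E`. -/
theorem stmt_15 {n : ℕ} (E : Submodule ℂ (Matrix (Fin n) (Fin n) ℂ))
    (nrm : Matrix (Fin n) (Fin n) ℂ → ℝ) (CΔ : ℝ) (hC : 1 ≤ CΔ)
    (hnn : ∀ x, 0 ≤ nrm x) (hzero : ∀ x, nrm x = 0 ↔ x = 0)
    (hhom : ∀ (α : ℂ) x, ‖α‖ ≤ 1 → nrm (α • x) ≤ nrm x)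
    (hscal : ∀ x, Filter.Tendsto (fun α : ℂ => nrm (α • x)) (nhds 0) (nhds 0))
    (htri : ∀ x y, nrm (x + y) ≤ CΔ * (nrm x + nrm y))
    (hsym : ∀ x y, x ∈ E → (∀ i, svSorted y i ≤ svSorted x i) →
      y ∈ E ∧ nrm y ≤ nrm x)
    (hcarrier : ∀ v : Fin n → ℂ, v ≠ 0 → ∃ q : Matrix (Fin n) (Fin n) ℂ,
      q ∈ E ∧ q * q = q ∧ qᴴ = q ∧ q.mulVec v ≠ 0) :
    (∀ q : Matrix (Fin n) (Fin n) ℂ, q * q = q → qᴴ = q → q ∈ E) ∧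
    (∀ x : Matrix (Fin n) (Fin n) ℂ, x ∈ E) :=
  stmt_15_general E nrm hsym hcarrier
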